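/- (Forward Convergence Lemma) If the compatible tuple (i₁▷i₂, D₁, D₂) is forward convergent to σ∈{±1} at time n₀ — i.e., every message received by the rectangle R_{i₁}^{i₂} from directions D₁ and D₂ equals σ for all times n ≥ n₀ — then every message sent from R_{i₁}^{i₂} in directions D₁ and D₂ equals σ for all times n ≥ n₀ + 2N - 1. -/

import Mathlib

/-- The four grid directions. -/
inductive Dir | north | south | east | west
deriving DecidableEq

/-- Direction vectors. -/
def dirVec : Dir → ℤ × ℤ
  | .north => (0, 1)
  | .south => (0, -1)
  | .east => (1, 0)
  | .west => (-1, 0)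

/-- The axis-aligned rectangle with corners `i₁` and `i₂`. -/
def rect (i₁ i₂ : ℤ × ℤ) : Set (ℤ × ℤ) :=
  {p | min i₁.1 i₂.1 ≤ p.1 ∧ p.1 ≤ max i₁.1 i₂.1 ∧
       min i₁.2 i₂.2 ≤ p.2 ∧ p.2 ≤ max i₁.2 i₂.2}

/-- The tuple `(i₁ ▷ i₂, D₁, D₂)` is compatible: `D₁, D₂` are orthogonal directions
and `i₂ - i₁` is a nonnegative combination of their direction vectors. -/
def compatible (i₁ i₂ : ℤ × ℤ) (D₁ D₂ : Dir) : Prop :=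
  ((dirVec D₁).1 * (dirVec D₂).1 + (dirVec D₁).2 * (dirVec D₂).2 = 0) ∧
  ∃ c₁ c₂ : ℝ, 0 ≤ c₁ ∧ 0 ≤ c₂ ∧
    c₁ * ((dirVec D₁).1 : ℝ) + c₂ * ((dirVec D₂).1 : ℝ) = ((i₂.1 - i₁.1 : ℤ) : ℝ) ∧
    c₁ * ((dirVec D₁).2 : ℝ) + c₂ * ((dirVec D₂).2 : ℝ) = ((i₂.2 - i₁.2 : ℤ) : ℝ)

/-- The interior `B = {1, …, N}²` of the `(N+2) × (N+2)` grid. -/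
def gridB (N : ℕ) : Set (ℤ × ℤ) :=
  {p | 1 ≤ p.1 ∧ p.1 ≤ N ∧ 1 ≤ p.2 ∧ p.2 ≤ N}

/-- The four lattice neighbors of a point. -/
def nbrs (p : ℤ × ℤ) : Finset (ℤ × ℤ) :=
  {(p.1 + 1, p.2), (p.1 - 1, p.2), (p.1, p.2 + 1), (p.1, p.2 - 1)}

lemma FCL.sum3 {g : ℤ × ℤ → ℤ} {x y z : ℤ × ℤ} (hxy : x ≠ y) (hxz : x ≠ z) (hyz : y ≠ z) :
    ∑ k ∈ ({x, y, z} : Finset (ℤ × ℤ)), g k = g x + g y + g z := by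
  rw [Finset.sum_insert (by simp [hxy, hxz]), Finset.sum_insert (by simp [hyz]),
    Finset.sum_singleton, add_assoc]

lemma FCL.sgn_mid (σ x : ℤ) (hσ : σ = 1 ∨ σ = -1) (hx : x = -1 ∨ x = 0 ∨ x = 1) :
    Int.sign (σ + x + σ) = σ := by
  rcases hσ with rfl | rfl <;> rcases hx with rfl | rfl | rfl <;> decide

lemma FCL.nbrs_sdiff (p u w : ℤ × ℤ)
    (hu : u = (1,0) ∨ u = (-1,0) ∨ u = (0,1) ∨ u = (0,-1))
    (hw : w = (1,0) ∨ w = (-1,0) ∨ w = (0,1) ∨ w = (0,-1))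
    (horth : u.1 * w.1 + u.2 * w.2 = 0) :
    nbrs p \ {p + u} = ({p - u, p + w, p - w} : Finset (ℤ × ℤ)) := by
  obtain ⟨p1, p2⟩ := p
  rcases hu with rfl | rfl | rfl | rfl <;> rcases hw with rfl | rfl | rfl | rfl <;>
    first
      | (ext q; simp [nbrs, Prod.ext_iff, Prod.mk_add_mk, Prod.mk_sub_mk] <;> omega)
      | exact absurd horth (by norm_num)

lemma FCL.dvec_d1 (p u w : ℤ × ℤ)
    (hu : u = (1,0) ∨ u = (-1,0) ∨ u = (0,1) ∨ u = (0,-1))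
    (hw : w = (1,0) ∨ w = (-1,0) ∨ w = (0,1) ∨ w = (0,-1))
    (horth : u.1 * w.1 + u.2 * w.2 = 0) :
    p - u ≠ p + w ∧ p - u ≠ p - w ∧ p + w ≠ p - w := by
  obtain ⟨p1, p2⟩ := p
  rcases hu with rfl | rfl | rfl | rfl <;> rcases hw with rfl | rfl | rfl | rfl <;>
    first
      | (refine ⟨?_, ?_, ?_⟩ <;>
          (intro h; simp [Prod.ext_iff, Prod.mk_add_mk, Prod.mk_sub_mk] at h <;> omega))
      | exact absurd horth (by norm_num)

lemma FCL.step_lemma (σ : ℤ) (hσ : σ = 1 ∨ σ = -1) (p u w : ℤ × ℤ)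
    (hu : u = (1,0) ∨ u = (-1,0) ∨ u = (0,1) ∨ u = (0,-1))
    (hw : w = (1,0) ∨ w = (-1,0) ∨ w = (0,1) ∨ w = (0,-1))
    (horth : u.1 * w.1 + u.2 * w.2 = 0)
    (g : ℤ × ℤ → ℤ) (hrange : ∀ q, g q = -1 ∨ g q = 0 ∨ g q = 1)
    (h1 : g (p - u) = σ) (h2 : g (p - w) = σ) :
    Int.sign (∑ k ∈ nbrs p \ {p + u}, g k) = σ := by
  obtain ⟨d1, d2, d3⟩ := FCL.dvec_d1 p u w hu hw horth
  rw [FCL.nbrs_sdiff p u w hu hw horth, FCL.sum3 d1 d2 d3, h1, h2]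
  exact FCL.sgn_mid σ _ hσ (hrange _)

lemma FCL.add_mem_nbrs (p v : ℤ × ℤ)
    (hv : v = (1,0) ∨ v = (-1,0) ∨ v = (0,1) ∨ v = (0,-1)) :
    p + v ∈ nbrs p := by
  obtain ⟨p1, p2⟩ := p
  rcases hv with rfl | rfl | rfl | rfl <;> simp [nbrs, Prod.ext_iff] <;> omega

lemma FCL.core (N : ℕ) (σ : ℤ) (hσ : σ = 1 ∨ σ = -1) (n₀ : ℕ)
    (R : Set (ℤ × ℤ)) (hRB : R ⊆ gridB N)
    (v₁ v₂ : ℤ × ℤ)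
    (hv₁ : v₁ = (1,0) ∨ v₁ = (-1,0) ∨ v₁ = (0,1) ∨ v₁ = (0,-1))
    (hv₂ : v₂ = (1,0) ∨ v₂ = (-1,0) ∨ v₂ = (0,1) ∨ v₂ = (0,-1))
    (horth : v₁.1 * v₂.1 + v₁.2 * v₂.2 = 0)
    (ℓ : ℤ × ℤ → ℕ)
    (hstep : ∀ p ∈ R, ∀ v, (v = v₁ ∨ v = v₂) → p - v ∈ R → ℓ (p - v) + 1 = ℓ p)
    (m : ℕ → (ℤ × ℤ) → (ℤ × ℤ) → ℤ)
    (hrange : ∀ n p q, m n p q = -1 ∨ m n p q = 0 ∨ m n p q = 1)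
    (hup : ∀ p ∈ gridB N, ∀ q ∈ nbrs p, ∀ n : ℕ, 0 < n →
      m n p q = Int.sign (∑ k ∈ nbrs p \ {q}, m (n-1) k p))
    (hFC : ∀ v, (v = v₁ ∨ v = v₂) → ∀ p : ℤ × ℤ, p ∉ R → p + v ∈ R →
      ∀ n : ℕ, n₀ ≤ n → m n p (p + v) = σ) :
    ∀ v, (v = v₁ ∨ v = v₂) → ∀ p ∈ R, ∀ n : ℕ, n₀ + ℓ p + 1 ≤ n → m n p (p + v) = σ := by
  suffices H : ∀ K : ℕ, ∀ p ∈ R, ℓ p ≤ K → ∀ v, (v = v₁ ∨ v = v₂) → ∀ n : ℕ,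
      n₀ + ℓ p + 1 ≤ n → m n p (p + v) = σ by
    intro v hv p hp n hn
    exact H (ℓ p) p hp le_rfl v hv n hn
  intro K
  induction K using Nat.strong_induction_on with
  | _ K ih =>
    intro p hp hpK v hv n hn
    have key : ∀ w, (w = v₁ ∨ w = v₂) → m (n-1) (p - w) p = σ := by
      intro w hw
      have hpw : p - w + w = p := by ring
      by_cases hR : p - w ∈ R
      · have hs := hstep p hp w hw hR
        have := ih (ℓ (p - w)) (by omega) (p - w) hR le_rfl w hw (n - 1) (by omega)
        rwa [hpw] at this
      · have := hFC w hw (p - w) hR (by rwa [hpw]) (n - 1) (by omega)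
        rwa [hpw] at this
    rw [hup p (hRB hp) (p + v)
      (FCL.add_mem_nbrs p v (by rcases hv with rfl | rfl; exacts [hv₁, hv₂]))
      n (by omega)]
    rcases hv with rfl | rfl
    · exact FCL.step_lemma σ hσ p v v₂ hv₁ hv₂ horth (fun q => m (n-1) q p)
        (fun q => hrange _ _ _) (key v (Or.inl rfl)) (key v₂ (Or.inr rfl))
    · exact FCL.step_lemma σ hσ p v v₁ hv₂ hv₁ (by linear_combination horth)
        (fun q => m (n-1) q p) (fun q => hrange _ _ _)
        (key v (Or.inr rfl)) (key v₁ (Or.inl rfl))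

/-- Forward Convergence Lemma: if the compatible tuple `(i₁ ▷ i₂, D₁, D₂)` is forward
convergent to `σ ∈ {±1}` at time `n₀` (every message received by the rectangle
`R_{i₁}^{i₂}` from directions `D₁, D₂` equals `σ` for all `n ≥ n₀`), then every message
sent from the rectangle in directions `D₁, D₂` equals `σ` for all `n ≥ n₀ + 2N - 1`. -/
theorem forward_convergence_lemma
    (N : ℕ) (σ : ℤ) (hσ : σ = 1 ∨ σ = -1) (n₀ : ℕ)
    (i₁ i₂ : ℤ × ℤ) (hi₁ : i₁ ∈ gridB N) (hi₂ : i₂ ∈ gridB N)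
    (D₁ D₂ : Dir) (hcomp : compatible i₁ i₂ D₁ D₂)
    (m : ℕ → (ℤ × ℤ) → (ℤ × ℤ) → ℤ)
    -- all messages lie in {-1, 0, 1}
    (hrange : ∀ n p q, m n p q = -1 ∨ m n p q = 0 ∨ m n p q = 1)
    -- difference-message update for interior senders
    (hup : ∀ p ∈ gridB N, ∀ q ∈ nbrs p, ∀ n : ℕ, 0 < n →
      m n p q = Int.sign (∑ k ∈ nbrs p \ {q}, m (n-1) k p))
    -- forward convergence: messages received by the rectangle from D₁, D₂ equal σ
    (hFC : ∀ D ∈ ({D₁, D₂} : Set Dir), ∀ p : ℤ × ℤ, p ∉ rect i₁ i₂ →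
      p + dirVec D ∈ rect i₁ i₂ → ∀ n : ℕ, n₀ ≤ n → m n p (p + dirVec D) = σ) :
    ∀ D ∈ ({D₁, D₂} : Set Dir), ∀ p ∈ rect i₁ i₂, ∀ n : ℕ,
      n₀ + 2 * N - 1 ≤ n → m n p (p + dirVec D) = σ := by
  obtain ⟨horth, c₁, c₂, hc₁, hc₂, hx, hy⟩ := hcomp
  set v₁ := dirVec D₁ with hv₁def
  set v₂ := dirVec D₂ with hv₂def
  have hv₁ : v₁ = (1,0) ∨ v₁ = (-1,0) ∨ v₁ = (0,1) ∨ v₁ = (0,-1) := by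
    cases D₁ <;> simp [hv₁def, dirVec]
  have hv₂ : v₂ = (1,0) ∨ v₂ = (-1,0) ∨ v₂ = (0,1) ∨ v₂ = (0,-1) := by
    cases D₂ <;> simp [hv₂def, dirVec]
  simp only [gridB, Set.mem_setOf_eq] at hi₁ hi₂
  -- i₁ is the extreme corner of the rectangle in both projections
  have hd : 0 ≤ (i₂.1 - i₁.1) * v₁.1 + (i₂.2 - i₁.2) * v₁.2 ∧
      0 ≤ (i₂.1 - i₁.1) * v₂.1 + (i₂.2 - i₁.2) * v₂.2 := by
    clear hv₁def hv₂def
    rcases hv₁ with h1 | h1 | h1 | h1 <;> rcases hv₂ with h2 | h2 | h2 | h2 <;>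
      rw [h1, h2] at horth hx hy ⊢ <;>
      first
        | (push_cast at hx hy
           constructor <;> (rify; linarith [hc₁, hc₂, hx, hy]))
        | exact absurd horth (by norm_num)
  -- projections of rectangle points lie in [0, N-1]
  have hgeom : ∀ v, (v = v₁ ∨ v = v₂) → ∀ p ∈ rect i₁ i₂,
      0 ≤ (p.1 - i₁.1) * v.1 + (p.2 - i₁.2) * v.2 ∧
      (p.1 - i₁.1) * v.1 + (p.2 - i₁.2) * v.2 + 1 ≤ N := by
    intro v hv p hp
    simp only [rect, Set.mem_setOf_eq] at hp
    obtain ⟨hd1, hd2⟩ := hd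
    rcases hv with rfl | rfl
    · rcases hv₁ with h1 | h1 | h1 | h1 <;> rw [h1] at hd1 ⊢ <;> simp at hd1 ⊢ <;> omega
    · rcases hv₂ with h2 | h2 | h2 | h2 <;> rw [h2] at hd2 ⊢ <;> simp at hd2 ⊢ <;> omega
  have hRB : rect i₁ i₂ ⊆ gridB N := by
    intro p hp
    simp only [rect, Set.mem_setOf_eq] at hp
    simp only [gridB, Set.mem_setOf_eq]
    omega
  have hu₁ : v₁.1 * v₁.1 + v₁.2 * v₁.2 = 1 := by
    rcases hv₁ with h | h | h | h <;> rw [h] <;> norm_num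
  have hu₂ : v₂.1 * v₂.1 + v₂.2 * v₂.2 = 1 := by
    rcases hv₂ with h | h | h | h <;> rw [h] <;> norm_num
  have hstep : ∀ p ∈ rect i₁ i₂, ∀ v, (v = v₁ ∨ v = v₂) → p - v ∈ rect i₁ i₂ →
      ((((p-v).1 - i₁.1) * v₁.1 + ((p-v).2 - i₁.2) * v₁.2 +
        (((p-v).1 - i₁.1) * v₂.1 + ((p-v).2 - i₁.2) * v₂.2)).toNat + 1 =
       ((p.1 - i₁.1) * v₁.1 + (p.2 - i₁.2) * v₁.2 +
        ((p.1 - i₁.1) * v₂.1 + (p.2 - i₁.2) * v₂.2)).toNat) := by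
    intro p hp v hv hq
    obtain ⟨g1, -⟩ := hgeom v₁ (Or.inl rfl) p hp
    obtain ⟨g2, -⟩ := hgeom v₂ (Or.inr rfl) p hp
    obtain ⟨h1, -⟩ := hgeom v₁ (Or.inl rfl) (p - v) hq
    obtain ⟨h2, -⟩ := hgeom v₂ (Or.inr rfl) (p - v) hq
    have e : ((p-v).1 - i₁.1) * v₁.1 + ((p-v).2 - i₁.2) * v₁.2 +
        (((p-v).1 - i₁.1) * v₂.1 + ((p-v).2 - i₁.2) * v₂.2) =
        (p.1 - i₁.1) * v₁.1 + (p.2 - i₁.2) * v₁.2 +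
        ((p.1 - i₁.1) * v₂.1 + (p.2 - i₁.2) * v₂.2) - 1 := by
      simp only [Prod.fst_sub, Prod.snd_sub]
      rcases hv with rfl | rfl
      · linear_combination (-1 : ℤ) * hu₁ - horth
      · linear_combination (-1 : ℤ) * hu₂ - horth
    have n1 : 0 ≤ ((p-v).1 - i₁.1) * v₁.1 + ((p-v).2 - i₁.2) * v₁.2 +
        (((p-v).1 - i₁.1) * v₂.1 + ((p-v).2 - i₁.2) * v₂.2) := add_nonneg h1 h2
    have n2 : 0 ≤ (p.1 - i₁.1) * v₁.1 + (p.2 - i₁.2) * v₁.2 +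
        ((p.1 - i₁.1) * v₂.1 + (p.2 - i₁.2) * v₂.2) := add_nonneg g1 g2
    set X := ((p-v).1 - i₁.1) * v₁.1 + ((p-v).2 - i₁.2) * v₁.2 +
        (((p-v).1 - i₁.1) * v₂.1 + ((p-v).2 - i₁.2) * v₂.2) with hX
    set Y := (p.1 - i₁.1) * v₁.1 + (p.2 - i₁.2) * v₁.2 +
        ((p.1 - i₁.1) * v₂.1 + (p.2 - i₁.2) * v₂.2) with hY
    omega
  have main := FCL.core N σ hσ n₀ (rect i₁ i₂) hRB v₁ v₂ hv₁ hv₂ horth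
    (fun p => ((p.1 - i₁.1) * v₁.1 + (p.2 - i₁.2) * v₁.2 +
        ((p.1 - i₁.1) * v₂.1 + (p.2 - i₁.2) * v₂.2)).toNat)
    hstep m hrange hup ?_
  · intro D hD p hp n hn
    obtain ⟨g1, g1'⟩ := hgeom v₁ (Or.inl rfl) p hp
    obtain ⟨g2, g2'⟩ := hgeom v₂ (Or.inr rfl) p hp
    simp only [Set.mem_insert_iff, Set.mem_singleton_iff] at hD
    rcases hD with rfl | rfl
    · refine main v₁ (Or.inl rfl) p hp n ?_
      set A := (p.1 - i₁.1) * v₁.1 + (p.2 - i₁.2) * v₁.2 with hA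
      set B := (p.1 - i₁.1) * v₂.1 + (p.2 - i₁.2) * v₂.2 with hB
      omega
    · refine main v₂ (Or.inr rfl) p hp n ?_
      set A := (p.1 - i₁.1) * v₁.1 + (p.2 - i₁.2) * v₁.2 with hA
      set B := (p.1 - i₁.1) * v₂.1 + (p.2 - i₁.2) * v₂.2 with hB
      omega
  · intro v hv p hpn hpi n hn
    rcases hv with rfl | rfl
    · exact hFC D₁ (Set.mem_insert _ _) p hpn hpi n hn
    · exact hFC D₂ (Set.mem_insert_iff.mpr (Or.inr rfl)) p hpn hpi n hn
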